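/- arXiv:2512.24889 — 2 statements merged into one kernel-verified Lean document; each statement's English description precedes it below -/
import Mathlib

section
/- Let X_s be a T×N_s and X_c a T×N_c complex matrix whose columns are linearly independent, let y be a complex vector of length T, let γ₁, γ₂, γ₃ and γ₁', γ₂' be nonnegative reals with γ₁ + γ₂ = γ₁' + γ₂' > 0 and γ₂' + γ₃ > 0, and let Û_s(γ₁,γ₂,γ₃) = 2(γ₂+γ₃) · A⁻¹ (I − X_c (X_c* A⁻¹ X_c)⁻¹ X_c* A⁻¹) X_s with A = 2((γ₁+γ₂)·I + γ₃·X_s X_s*). Then the estimated delay–Doppler response ρ̂_s = (Û_s(γ₁,γ₂,γ₃))* y satisfies ρ̂_s = ((γ₂+γ₃)/(γ₂'+γ₃)) · (Û_s(γ₁',γ₂',γ₃))* y; in particular the two estimates are positive real scalar multiples of one another, so the relative amplitudes of their entries coincide. -/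
open Matrix

/-- The matrix `A = 2((γ₁+γ₂)·I + γ₃·X_s X_sᴴ)` from the KKT system. -/
noncomputable def Amat {T Ns : ℕ} (Xs : Matrix (Fin T) (Fin Ns) ℂ) (γ₁ γ₂ γ₃ : ℝ) :
    Matrix (Fin T) (Fin T) ℂ :=
  (2 : ℝ) • ((γ₁ + γ₂) • (1 : Matrix (Fin T) (Fin T) ℂ) + γ₃ • (Xs * Xsᴴ))

/-- The closed-form optimal solution
`Û_s(γ₁,γ₂,γ₃) = 2(γ₂+γ₃)·A⁻¹ (I − X_c (X_cᴴ A⁻¹ X_c)⁻¹ X_cᴴ A⁻¹) X_s`. -/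
noncomputable def Uopt {T Ns Nc : ℕ} (Xs : Matrix (Fin T) (Fin Ns) ℂ)
    (Xc : Matrix (Fin T) (Fin Nc) ℂ) (γ₁ γ₂ γ₃ : ℝ) : Matrix (Fin T) (Fin Ns) ℂ :=
  (2 * (γ₂ + γ₃)) •
    ((Amat Xs γ₁ γ₂ γ₃)⁻¹ *
      ((1 : Matrix (Fin T) (Fin T) ℂ)
        - Xc * (Xcᴴ * (Amat Xs γ₁ γ₂ γ₃)⁻¹ * Xc)⁻¹ * Xcᴴ * (Amat Xs γ₁ γ₂ γ₃)⁻¹) * Xs)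

/-! `A` depends on `γ₁, γ₂` only through `γ₁ + γ₂`, so `Û_s(γ₁,γ₂,γ₃)` and `Û_s(γ₁',γ₂',γ₃)`
differ only in their scalar prefactors `2(γ₂+γ₃)` and `2(γ₂'+γ₃)`. -/

section

variable {T Ns Nc : ℕ} (Xs : Matrix (Fin T) (Fin Ns) ℂ) (Xc : Matrix (Fin T) (Fin Nc) ℂ)
  {γ₁ γ₂ γ₁' γ₂' : ℝ} (γ₃ : ℝ)

theorem Amat_eq_of_add_eq (hsum : γ₁ + γ₂ = γ₁' + γ₂') :
    Amat Xs γ₁ γ₂ γ₃ = Amat Xs γ₁' γ₂' γ₃ := by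
  rw [Amat, Amat, hsum]

theorem Uopt_eq_smul_of_add_eq (hsum : γ₁ + γ₂ = γ₁' + γ₂') (hne : γ₂' + γ₃ ≠ 0) :
    Uopt Xs Xc γ₁ γ₂ γ₃ = ((γ₂ + γ₃) / (γ₂' + γ₃)) • Uopt Xs Xc γ₁' γ₂' γ₃ := by
  rw [Uopt, Uopt, Amat_eq_of_add_eq Xs γ₃ hsum, smul_smul]
  congr 1
  field_simp

end

theorem stmt_8_general (T Ns Nc : ℕ)
    (Xs : Matrix (Fin T) (Fin Ns) ℂ) (Xc : Matrix (Fin T) (Fin Nc) ℂ)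
    (y : Fin T → ℂ)
    (γ₁ γ₂ γ₃ γ₁' γ₂' : ℝ)
    (hsum : γ₁ + γ₂ = γ₁' + γ₂') (hpos' : 0 < γ₂' + γ₃) :
    (Uopt Xs Xc γ₁ γ₂ γ₃)ᴴ *ᵥ y
      = ((γ₂ + γ₃) / (γ₂' + γ₃)) • ((Uopt Xs Xc γ₁' γ₂' γ₃)ᴴ *ᵥ y) := by
  rw [Uopt_eq_smul_of_add_eq Xs Xc γ₃ hsum hpos'.ne', conjTranspose_smul, star_trivial,
    smul_mulVec]

/-- If `γ₁+γ₂ = γ₁'+γ₂' > 0` and `γ₂'+γ₃ > 0`, the estimated delay–Doppler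
response `ρ̂_s = Û_s(γ₁,γ₂,γ₃)ᴴ y` satisfies
`ρ̂_s = ((γ₂+γ₃)/(γ₂'+γ₃)) · Û_s(γ₁',γ₂',γ₃)ᴴ y`, i.e. the two estimates are positive
real scalar multiples of one another. -/
theorem stmt_8 (T Ns Nc : ℕ)
    (Xs : Matrix (Fin T) (Fin Ns) ℂ) (Xc : Matrix (Fin T) (Fin Nc) ℂ)
    (hXc : Function.Injective (fun v : Fin Nc → ℂ => Xc.mulVec v))
    (y : Fin T → ℂ)
    (γ₁ γ₂ γ₃ γ₁' γ₂' : ℝ)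
    (h1 : 0 ≤ γ₁) (h2 : 0 ≤ γ₂) (h3 : 0 ≤ γ₃) (h1' : 0 ≤ γ₁') (h2' : 0 ≤ γ₂')
    (hsum : γ₁ + γ₂ = γ₁' + γ₂') (hpos : 0 < γ₁ + γ₂) (hpos' : 0 < γ₂' + γ₃) :
    (Uopt Xs Xc γ₁ γ₂ γ₃)ᴴ *ᵥ y
      = ((γ₂ + γ₃) / (γ₂' + γ₃)) • ((Uopt Xs Xc γ₁' γ₂' γ₃)ᴴ *ᵥ y) :=
  stmt_8_general T Ns Nc Xs Xc y γ₁ γ₂ γ₃ γ₁' γ₂' hsum hpos'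
end

section
/- Let X_s be a T×N_s complex matrix and γ ∈ (0,1]. Then Û = (γ·I + (1−γ)·X_s X_s*)⁻¹ X_s is the unique minimizer of f(U) = γ‖U − X_s‖_F² + (1−γ)‖X_s* U − I‖_F² over all T×N_s complex matrices U; in particular, when γ = 1 the unique minimizer is Û = X_s, so with no clutter constraints the optimization reproduces the classical cross-ambiguity filter bank. -/
open Matrix

/-- Squared Frobenius norm of a complex matrix: `‖M‖_F² = Σ_{i,j} |M i j|²`. -/
noncomputable def frobSq {m n : ℕ} (M : Matrix (Fin m) (Fin n) ℂ) : ℝ :=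
  ∑ i, ∑ j, ‖M i j‖ ^ 2

/-!
The normal equation `A Û = X_s`, with `A = γ I + (1 - γ) X_s X_sᴴ`, says exactly that the cross
term vanishes when `f` is expanded around `Û`, so that
`f U = f Û + γ ‖U - Û‖_F² + (1 - γ) ‖X_sᴴ (U - Û)‖_F²`.
For `γ > 0` the extra terms are nonnegative and vanish only at `U = Û`; and `A` is positive
definite, hence invertible, so `Û = A⁻¹ X_s` solves the normal equation.
-/

open ComplexOrder

theorem frobSq_eq_re_trace {m n : ℕ} (M : Matrix (Fin m) (Fin n) ℂ) :
    frobSq M = (Mᴴ * M).trace.re := by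
  simp only [frobSq, trace, diag_apply, mul_apply, conjTranspose_apply, Complex.re_sum]
  rw [Finset.sum_comm]
  simp [Complex.sq_norm, Complex.normSq_apply]

theorem frobSq_nonneg {m n : ℕ} (M : Matrix (Fin m) (Fin n) ℂ) : 0 ≤ frobSq M := by
  unfold frobSq
  positivity

theorem frobSq_eq_zero_iff {m n : ℕ} {M : Matrix (Fin m) (Fin n) ℂ} : frobSq M = 0 ↔ M = 0 := by
  rw [frobSq, Fintype.sum_eq_zero_iff_of_nonneg fun i => by positivity, ← Matrix.ext_iff]
  simp [funext_iff, Fintype.sum_eq_zero_iff_of_nonneg, Pi.le_def]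

theorem frobSq_add {m n : ℕ} (M N : Matrix (Fin m) (Fin n) ℂ) :
    frobSq (M + N) = frobSq M + frobSq N + 2 * (Mᴴ * N).trace.re := by
  have hswap : (Nᴴ * M).trace.re = (Mᴴ * N).trace.re := by
    rw [← conjTranspose_conjTranspose M, ← conjTranspose_mul, trace_conjTranspose,
      conjTranspose_conjTranspose, Complex.star_def, Complex.conj_re]
  simp only [frobSq_eq_re_trace, conjTranspose_add, Matrix.add_mul, Matrix.mul_add, trace_add,
    Complex.add_re]
  linarith

theorem posDef_smul_one_add_smul_mul_conjTranspose {m n : Type*} [Fintype m] [DecidableEq m]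
    [Fintype n] (X : Matrix m n ℂ) {a b : ℝ} (ha : 0 < a) (hb : 0 ≤ b) :
    (a • (1 : Matrix m m ℂ) + b • (X * Xᴴ)).PosDef :=
  (PosDef.one.smul ha).add_posSemidef ((posSemidef_self_mul_conjTranspose X).smul hb)

noncomputable def filterCost {T Ns : ℕ} (γ : ℝ) (X U : Matrix (Fin T) (Fin Ns) ℂ) : ℝ :=
  γ * frobSq (U - X) + (1 - γ) * frobSq (Xᴴ * U - 1)

theorem filterCost_eq_add_of_mul_eq {T Ns : ℕ} {γ : ℝ} {X Û : Matrix (Fin T) (Fin Ns) ℂ}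
    (hÛ : (γ • 1 + (1 - γ) • (X * Xᴴ)) * Û = X) (U : Matrix (Fin T) (Fin Ns) ℂ) :
    filterCost γ X U =
      filterCost γ X Û + (γ * frobSq (U - Û) + (1 - γ) * frobSq (Xᴴ * (U - Û))) := by
  have hres : γ • (Û - X) + (1 - γ) • (X * (Xᴴ * Û - 1)) = 0 := by
    rw [← sub_eq_zero.mpr hÛ, Matrix.add_mul, smul_mul, smul_mul, Matrix.one_mul, Matrix.mul_sub,
      Matrix.mul_one, Matrix.mul_assoc]
    module
  have hcross : γ * ((U - Û)ᴴ * (Û - X)).trace.re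
      + (1 - γ) * ((Xᴴ * (U - Û))ᴴ * (Xᴴ * Û - 1)).trace.re = 0 := by
    simpa [Matrix.mul_add, Matrix.mul_smul, trace_add, trace_smul, conjTranspose_mul,
      Matrix.mul_assoc] using congrArg (fun M => ((U - Û)ᴴ * M).trace.re) hres
  have hU : U - X = (U - Û) + (Û - X) := by abel
  have hXU : Xᴴ * U - 1 = Xᴴ * (U - Û) + (Xᴴ * Û - 1) := by rw [Matrix.mul_sub]; abel
  rw [filterCost, filterCost, hU, hXU, frobSq_add, frobSq_add]
  linear_combination 2 * hcross

/-- For `γ ∈ (0,1]`, the matrix `Û = (γ·I + (1−γ)·X_s X_sᴴ)⁻¹ X_s` is the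
unique global minimizer of `f(U) = γ‖U − X_s‖_F² + (1−γ)‖X_sᴴ U − I‖_F²` over all
`T × N_s` complex matrices `U`; in particular when `γ = 1` the unique minimizer is
`Û = X_s`, so with no clutter constraints the optimization reproduces the classical
cross-ambiguity filter bank. -/
theorem stmt_17 (T Ns : ℕ)
    (Xs : Matrix (Fin T) (Fin Ns) ℂ)
    (γ : ℝ) (hγ0 : 0 < γ) (hγ1 : γ ≤ 1)
    (f : Matrix (Fin T) (Fin Ns) ℂ → ℝ)
    (hf : ∀ U, f U = γ * frobSq (U - Xs)
      + (1 - γ) * frobSq (Xsᴴ * U - (1 : Matrix (Fin Ns) (Fin Ns) ℂ)))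
    (Uhat : Matrix (Fin T) (Fin Ns) ℂ)
    (hU : Uhat = (γ • (1 : Matrix (Fin T) (Fin T) ℂ) + (1 - γ) • (Xs * Xsᴴ))⁻¹ * Xs) :
    (∀ U : Matrix (Fin T) (Fin Ns) ℂ, f Uhat ≤ f U) ∧
      (∀ U : Matrix (Fin T) (Fin Ns) ℂ, f U = f Uhat → U = Uhat) ∧
      (γ = 1 → Uhat = Xs) := by
  have hγ1' : 0 ≤ 1 - γ := sub_nonneg.mpr hγ1
  have hA := posDef_smul_one_add_smul_mul_conjTranspose Xs hγ0 hγ1'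
  have hnormal : (γ • 1 + (1 - γ) • (Xs * Xsᴴ)) * Uhat = Xs := by
    rw [hU, ← Matrix.mul_assoc, mul_nonsing_inv _ ((isUnit_iff_isUnit_det _).mp hA.isUnit),
      Matrix.one_mul]
  have hf' : f = filterCost γ Xs := funext hf
  have hexcess_nonneg (U : Matrix (Fin T) (Fin Ns) ℂ) :
      0 ≤ γ * frobSq (U - Uhat) + (1 - γ) * frobSq (Xsᴴ * (U - Uhat)) :=
    add_nonneg (mul_nonneg hγ0.le (frobSq_nonneg _)) (mul_nonneg hγ1' (frobSq_nonneg _))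
  refine ⟨fun U => ?_, fun U hUeq => ?_, fun hγ => ?_⟩
  · rw [hf', filterCost_eq_add_of_mul_eq hnormal U]
    exact le_add_of_nonneg_right (hexcess_nonneg U)
  · rw [hf', filterCost_eq_add_of_mul_eq hnormal U, add_eq_left] at hUeq
    have hdist : γ * frobSq (U - Uhat) = 0 := by
      nlinarith [frobSq_nonneg (Xsᴴ * (U - Uhat)), frobSq_nonneg (U - Uhat)]
    exact sub_eq_zero.mp (frobSq_eq_zero_iff.mp ((mul_eq_zero.mp hdist).resolve_left hγ0.ne'))
  · simp [hU, hγ]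
end
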